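/- If (g(x), x·g(x)) is a quasi-involution where g(x) = G(x^2), then (g(x)^2, x·g(x)) is also a quasi-involution; that is, if the inverse of (G(x^2), xG(x^2)) is (G(-x^2), xG(-x^2)), then the inverse of (G(x^2)^2, xG(x^2)) is (G(-x^2)^2, xG(-x^2)). -/

import Mathlib

open PowerSeries

/-- Composition f ∘ g of formal power series (intended for g with zero constant term). -/
noncomputable def comp (f g : ℚ⟦X⟧) : ℚ⟦X⟧ :=
  PowerSeries.mk fun n => ∑ k ∈ Finset.range (n + 1),
    PowerSeries.coeff (R := ℚ) k f * PowerSeries.coeff (R := ℚ) n (g ^ k)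

/-- (f(x) - f(0))/x. -/
noncomputable def shift (f : ℚ⟦X⟧) : ℚ⟦X⟧ := PowerSeries.mk fun n => PowerSeries.coeff (R := ℚ) (n + 1) f

/-- Action of the almost Riordan array (a; g, f) on a power series b. -/
noncomputable def aact (a g f b : ℚ⟦X⟧) : ℚ⟦X⟧ :=
  PowerSeries.C (R := ℚ) (PowerSeries.constantCoeff (R := ℚ) b) * a + PowerSeries.X * g * comp (shift b) f

/-- Product in the group of almost Riordan arrays of order 1 (triples (a; g, f)). -/
noncomputable def amul (M N : ℚ⟦X⟧ × ℚ⟦X⟧ × ℚ⟦X⟧) : ℚ⟦X⟧ × ℚ⟦X⟧ × ℚ⟦X⟧ :=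
  (aact M.1 M.2.1 M.2.2 N.1, M.2.1 * comp N.2.1 M.2.2, comp N.2.2 M.2.2)

/-- Product in the Riordan group (pairs (g, f)). -/
noncomputable def rmul (M N : ℚ⟦X⟧ × ℚ⟦X⟧) : ℚ⟦X⟧ × ℚ⟦X⟧ :=
  (M.1 * comp N.1 M.2, comp N.2 M.2)

/-! Composition with a series `f` of zero constant term is Mathlib's substitution `subst f`,
so it is a ring homomorphism; hence `(g, f) * (h, u) = 1` forces `(g ^ n, f) * (h ^ n, u) = 1`,
since `g ^ n * (h ∘ f) ^ n = (g * (h ∘ f)) ^ n = 1`. -/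

theorem coeff_pow_eq_zero_of_lt {f : ℚ⟦X⟧} (hf : constantCoeff f = 0) {n k : ℕ} (h : n < k) :
    coeff n (f ^ k) = 0 :=
  X_pow_dvd_iff.mp (pow_dvd_pow_of_dvd (X_dvd_iff.mpr hf) k) n h

theorem comp_eq_subst {f : ℚ⟦X⟧} (hf : constantCoeff f = 0) (a : ℚ⟦X⟧) :
    comp a f = a.subst f := by
  ext n
  have hsupport : (fun d ↦ coeff d a • coeff n (f ^ d)).support ⊆ Finset.range (n + 1) := by
    intro d hd
    by_contra hdn
    rw [Finset.coe_range, Set.mem_Iio, not_lt] at hdn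
    exact hd (smul_eq_zero_of_right _ (coeff_pow_eq_zero_of_lt hf (by omega)))
  rw [coeff_subst' (HasSubst.of_constantCoeff_zero' hf), finsum_eq_sum_of_support_subset _ hsupport]
  simp only [comp, coeff_mk, smul_eq_mul]

theorem comp_pow {f : ℚ⟦X⟧} (hf : constantCoeff f = 0) (a : ℚ⟦X⟧) (n : ℕ) :
    comp (a ^ n) f = comp a f ^ n := by
  rw [comp_eq_subst hf, comp_eq_subst hf, subst_pow (HasSubst.of_constantCoeff_zero' hf)]

theorem rmul_pow_eq_one {g f h u : ℚ⟦X⟧} (hf : constantCoeff f = 0)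
    (hinv : rmul (g, f) (h, u) = (1, X)) (n : ℕ) :
    rmul (g ^ n, f) (h ^ n, u) = (1, X) := by
  obtain ⟨hfst, hsnd⟩ := Prod.mk.inj hinv
  refine Prod.ext ?_ hsnd
  change g ^ n * comp (h ^ n) f = 1
  rw [comp_pow hf, ← mul_pow, show g * comp h f = 1 from hfst, one_pow]

theorem quasi_involution_square_general (G : ℚ⟦X⟧)
    (h1 : rmul (comp G (X ^ 2), X * comp G (X ^ 2)) (comp G (-X ^ 2), X * comp G (-X ^ 2)) = (1, X))
    (h2 : rmul (comp G (-X ^ 2), X * comp G (-X ^ 2)) (comp G (X ^ 2), X * comp G (X ^ 2)) = (1, X)) :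
    rmul (comp G (X ^ 2) ^ 2, X * comp G (X ^ 2)) (comp G (-X ^ 2) ^ 2, X * comp G (-X ^ 2)) = (1, X) ∧
    rmul (comp G (-X ^ 2) ^ 2, X * comp G (-X ^ 2)) (comp G (X ^ 2) ^ 2, X * comp G (X ^ 2)) = (1, X) :=
  ⟨rmul_pow_eq_one (by simp) h1 2, rmul_pow_eq_one (by simp) h2 2⟩

/-- If the inverse of (G(x^2), xG(x^2)) is (G(-x^2), xG(-x^2)), then the inverse of
(G(x^2)^2, xG(x^2)) is (G(-x^2)^2, xG(-x^2)). -/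
theorem quasi_involution_square (G : ℚ⟦X⟧)
    (hG0 : PowerSeries.constantCoeff (R := ℚ) G = 1)
    (h1 : rmul (comp G (X ^ 2), X * comp G (X ^ 2)) (comp G (-X ^ 2), X * comp G (-X ^ 2)) = (1, X))
    (h2 : rmul (comp G (-X ^ 2), X * comp G (-X ^ 2)) (comp G (X ^ 2), X * comp G (X ^ 2)) = (1, X)) :
    rmul (comp G (X ^ 2) ^ 2, X * comp G (X ^ 2)) (comp G (-X ^ 2) ^ 2, X * comp G (-X ^ 2)) = (1, X) ∧
    rmul (comp G (-X ^ 2) ^ 2, X * comp G (-X ^ 2)) (comp G (X ^ 2) ^ 2, X * comp G (X ^ 2)) = (1, X) :=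
  quasi_involution_square_general G h1 h2
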